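/- Let s = (s_1, ..., s_n) be a sequence of positive integers such that \gcd(s_i, s_{i+1}) = 1 for 1 \le i < n. Then the h*-vector of the rational lecture hall polytope R_n^{(s)} is symmetric if and only if s is u-generated by some sequence of positive integers. -/

import Mathlib

noncomputable section

open scoped Classical

/-- The set of integer lattice points in `ℝ^n`. -/
def intLattice (n : ℕ) : Set (Fin n → ℝ) :=
  Set.range (fun (m : Fin n → ℤ) => fun i => (m i : ℝ))

/-- `c` is a Gorenstein point of `C`: an integer point in the interior of `C`
with `C° ∩ ℤ^n = c + (C ∩ ℤ^n)`. -/
def IsGorensteinPoint {n : ℕ} (C : Set (Fin n → ℝ)) (c : Fin n → ℝ) : Prop :=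
  c ∈ interior C ∧ c ∈ intLattice n ∧
    interior C ∩ intLattice n = (fun x => c + x) '' (C ∩ intLattice n)

/-- A cone is Gorenstein if it has a Gorenstein point. -/
def IsGorensteinCone {n : ℕ} (C : Set (Fin n → ℝ)) : Prop :=
  ∃ c, IsGorensteinPoint C c

/-- The `s`-lecture hall cone `{λ : 0 ≤ λ₁/s₁ ≤ λ₂/s₂ ≤ ⋯ ≤ λₙ/sₙ}`,
where coordinate `i : Fin n` corresponds to the mathematical index `i+1`. -/
def lhCone (n : ℕ) (s : ℕ → ℤ) : Set (Fin n → ℝ) :=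
  {x | (∀ i : Fin n, (i : ℕ) = 0 → 0 ≤ x i / (s 1 : ℝ)) ∧
       (∀ i j : Fin n, (j : ℕ) = (i : ℕ) + 1 →
          x i / (s ((i : ℕ) + 1) : ℝ) ≤ x j / (s ((j : ℕ) + 1) : ℝ))}

/-- The `s`-lecture hall partitions of length `n`: integer points of the cone. -/
def lhPartitions (n : ℕ) (s : ℕ → ℤ) : Set (Fin n → ℤ) :=
  {lam | (fun i => (lam i : ℝ)) ∈ lhCone n s}

/-- The generating function `f_n^{(s)}(q) = ∑_{λ ∈ L_n^{(s)}} q^{|λ|}` as a power series. -/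
def lhGenFun (n : ℕ) (s : ℕ → ℤ) : PowerSeries ℚ :=
  PowerSeries.mk fun m =>
    (Set.ncard {lam : Fin n → ℤ | lam ∈ lhPartitions n s ∧ ∑ i, lam i = (m : ℤ)} : ℚ)

/-- A rational function `r(q)` is self-reciprocal if `r(1/q) = ± q^k r(q)`
for some nonnegative integer `k`. -/
def SelfReciprocalRat (r : RatFunc ℚ) : Prop :=
  ∃ k : ℕ, RatFunc.eval (algebraMap ℚ (RatFunc ℚ)) (RatFunc.X)⁻¹ r = RatFunc.X ^ k * r ∨
           RatFunc.eval (algebraMap ℚ (RatFunc ℚ)) (RatFunc.X)⁻¹ r = -(RatFunc.X ^ k * r)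

/-- A power series is self-reciprocal as a rational function: it is the power series
expansion of a rational function `H/D` (with `D(0) ≠ 0`) which is self-reciprocal. -/
def GenFunSelfReciprocal (f : PowerSeries ℚ) : Prop :=
  ∃ H D : Polynomial ℚ, D.coeff 0 ≠ 0 ∧
    (↑H : PowerSeries ℚ) = f * (↑D : PowerSeries ℚ) ∧
    SelfReciprocalRat (algebraMap (Polynomial ℚ) (RatFunc ℚ) H /
      algebraMap (Polynomial ℚ) (RatFunc ℚ) D)

/-- The Ehrhart series `E_n^{(s)}(x) = ∑_{t ≥ 0} i(R_n^{(s)}, t) xᵗ` of the rational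
lecture hall polytope, where `i(R_n^{(s)}, t) = #{λ ∈ L_n^{(s)} : λₙ ≤ t}`. -/
def ehrhartSeries (n : ℕ) (s : ℕ → ℤ) : PowerSeries ℚ :=
  PowerSeries.mk fun t =>
    (Set.ncard {lam : Fin n → ℤ | lam ∈ lhPartitions n s ∧
        ∀ h : 0 < n, lam ⟨n - 1, Nat.sub_lt h Nat.one_pos⟩ ≤ (t : ℤ)} : ℚ)

/-- The `h^*`-vector of `R_n^{(s)}` is symmetric: the numerator polynomial
`Q_n^{(s)}` in `E_n^{(s)}(x) = Q_n^{(s)}(x)/(1 - x^{sₙ})^{n+1}` is palindromic. -/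
def HStarSymmetric (n : ℕ) (s : ℕ → ℤ) : Prop :=
  ∃ Q : Polynomial ℚ,
    (↑Q : PowerSeries ℚ) =
      ehrhartSeries n s * (1 - PowerSeries.X ^ (s n).toNat) ^ (n + 1) ∧
    Q.reverse = Q

/-- The sequence `(s₁,…,sₙ)` is `u`-generated by `(u₁,…,u_{n-1})`:
`s₂ = u₁s₁ - 1` and `s_{i+1} = uᵢsᵢ - s_{i-1}` for `i > 1`. -/
def UGenerated (n : ℕ) (s u : ℕ → ℤ) : Prop :=
  (2 ≤ n → s 2 = u 1 * s 1 - 1) ∧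
  ∀ i, 1 < i → i + 1 ≤ n → s (i + 1) = u i * s i - s (i - 1)

/-!
Write `g_j(λ) = s_{j-1}λ_j - s_jλ_{j-1}` (`slack`, with `s₀ = 1`, `λ₀ = 0`) and
`e_j = s_{j-1}s_j` (`width`). The cone `{g ≥ 0}` is simplicial, generated by
`v⁽ʲ⁾ = (0, …, 0, s_j, …, s_n)` with `g_i(v⁽ʲ⁾) = δ_{ij} e_j`, and every `v⁽ʲ⁾` has `λₙ = sₙ`.
Grading lattice points by `λₙ` therefore gives `E(x)(1 - x^{sₙ})^{n+1} = (1 + ⋯ + x^{sₙ-1}) P(x)`,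
where `P` counts the fundamental parallelepiped `0 ≤ g < e`; so the `h*`-vector is symmetric iff
`P` is palindromic.

If `c` is a Gorenstein point, `g(c) = 1`, then `λ ↦ v⁽¹⁾ + ⋯ + v⁽ⁿ⁾ - c - λ` is an involution of
the parallelepiped reversing heights, so `P` is palindromic. Conversely, `λ ↦ v⁽¹⁾ + ⋯ + v⁽ⁿ⁾ - λ`
maps the parallelepiped onto its interior analogue `1 ≤ g ≤ e`; if `P` is palindromic, this makes
the generating function of the interior of the cone `x^k` times that of the cone. The unique
interior parallelepiped point `c` at height `k` then satisfies `interior = c + cone` by counting,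
and since by `gcd(s_{j-1}, s_j) = 1` each `g_j` takes the value `1` at some interior point,
`g(c) = 1`.

Finally `g_j(c) = 1` reads `s_{j-1}c_j - s_jc_{j-1} = 1`; subtracting consecutive equations and
using `gcd(s_j, c_j) = 1` gives `s_j ∣ s_{j+1} + s_{j-1}`, which is `u`-generation, and conversely
`c` is produced from `u` by the same recursion as `s`.
-/

namespace LectureHall

open Finset

variable {n : ℕ} {s : ℕ → ℤ}

/-- `s` extended by `s₀ = 1`, so that `0 ≤ λ₁/s₁` becomes the case `j = 1` of
`λ_{j-1}/s_{j-1} ≤ λ_j/s_j` once `λ₀ = 0`. -/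
def sExt (s : ℕ → ℤ) (j : ℕ) : ℤ := if j = 0 then 1 else s j

@[simp] lemma sExt_zero (s : ℕ → ℤ) : sExt s 0 = 1 := rfl

lemma sExt_of_ne_zero (s : ℕ → ℤ) {j : ℕ} (hj : j ≠ 0) : sExt s j = s j := if_neg hj

lemma sExt_pos (hs : ∀ i, 1 ≤ i → i ≤ n → 0 < s i) {j : ℕ} (hj : j ≤ n) :
    0 < sExt s j := by
  rcases Nat.eq_zero_or_pos j with rfl | hj0
  · exact one_pos
  · rw [sExt_of_ne_zero s hj0.ne']; exact hs j hj0 hj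

def slack (s : ℕ → ℤ) : (ℕ → ℤ) →+ (ℕ → ℤ) :=
  AddMonoidHom.mk' (fun x j => sExt s (j - 1) * x j - sExt s j * x (j - 1))
    (fun x y => by funext j; simp only [Pi.add_apply]; ring)

lemma slack_apply (s x : ℕ → ℤ) (j : ℕ) :
    slack s x j = sExt s (j - 1) * x j - sExt s j * x (j - 1) := rfl

def width (s : ℕ → ℤ) (j : ℕ) : ℤ := sExt s (j - 1) * sExt s j

lemma width_pos (hs : ∀ i, 1 ≤ i → i ≤ n → 0 < s i) {j : ℕ} (hj : j ≤ n) :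
    0 < width s j :=
  mul_pos (sExt_pos hs (by omega)) (sExt_pos hs hj)

lemma div_sExt_eq_sum (hs : ∀ i, 1 ≤ i → i ≤ n → 0 < s i) {x : ℕ → ℤ}
    (hx : x 0 = 0) {j : ℕ} (hj : j ≤ n) :
    (x j : ℚ) / sExt s j = ∑ i ∈ Ioc 0 j, (slack s x i : ℚ) / width s i := by
  induction j with
  | zero => simp [hx]
  | succ j ih =>
    rw [sum_Ioc_succ_top (Nat.zero_le j), ← ih (by omega), slack_apply, width,
      Nat.add_sub_cancel]
    have h₀ : (sExt s j : ℚ) ≠ 0 := by exact_mod_cast (sExt_pos hs (by omega)).ne'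
    have h₁ : (sExt s (j + 1) : ℚ) ≠ 0 := by exact_mod_cast (sExt_pos hs hj).ne'
    push_cast
    field_simp
    ring

section Bounds

variable {x : ℕ → ℤ}

lemma div_sExt_mono (hs : ∀ i, 1 ≤ i → i ≤ n → 0 < s i) (hx : x 0 = 0)
    (hg : ∀ i, 1 ≤ i → i ≤ n → 0 ≤ slack s x i) {i j : ℕ} (hij : i ≤ j) (hj : j ≤ n) :
    (x i : ℚ) / sExt s i ≤ x j / sExt s j := by
  rw [div_sExt_eq_sum hs hx (hij.trans hj), div_sExt_eq_sum hs hx hj]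
  refine sum_le_sum_of_subset_of_nonneg (Ioc_subset_Ioc_right hij) fun k hk _ => ?_
  obtain ⟨hk0, hkj⟩ := mem_Ioc.mp hk
  have := hg k hk0 (hkj.trans hj)
  have := width_pos hs (hkj.trans hj)
  positivity

lemma nonneg_of_slack_nonneg (hs : ∀ i, 1 ≤ i → i ≤ n → 0 < s i) (hx : x 0 = 0)
    (hg : ∀ i, 1 ≤ i → i ≤ n → 0 ≤ slack s x i) {j : ℕ} (hj : j ≤ n) : 0 ≤ x j := by
  have h := div_sExt_mono hs hx hg (Nat.zero_le j) hj
  rw [hx, sExt_zero, Int.cast_zero, zero_div,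
    le_div_iff₀ (by exact_mod_cast sExt_pos hs hj), zero_mul] at h
  exact_mod_cast h

lemma le_sExt_mul_of_slack_nonneg (hs : ∀ i, 1 ≤ i → i ≤ n → 0 < s i) (hx : x 0 = 0)
    (hg : ∀ i, 1 ≤ i → i ≤ n → 0 ≤ slack s x i) {j : ℕ} (hj : j ≤ n) :
    x j ≤ sExt s j * x n := by
  have hj' := sExt_pos hs hj
  have hn' := sExt_pos hs le_rfl
  have hxn := nonneg_of_slack_nonneg hs hx hg le_rfl
  have h := div_sExt_mono hs hx hg hj le_rfl
  have h₁ : (x n : ℚ) / sExt s n ≤ x n :=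
    div_le_self (by exact_mod_cast hxn) (by exact_mod_cast hn')
  rw [div_le_iff₀ (by exact_mod_cast hj')] at h
  have : (x j : ℚ) ≤ x n * sExt s j :=
    h.trans (mul_le_mul_of_nonneg_right h₁ (by exact_mod_cast hj'.le))
  rw [mul_comm] at this
  exact_mod_cast this

lemma lt_mul_of_slack_lt_width (hs : ∀ i, 1 ≤ i → i ≤ n → 0 < s i) (hx : x 0 = 0)
    (hg : ∀ i, 1 ≤ i → i ≤ n → slack s x i < width s i) {j : ℕ}
    (hj1 : 1 ≤ j) (hj : j ≤ n) : x j < j * sExt s j := by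
  have h := div_sExt_eq_sum hs hx hj
  have hlt : ∑ i ∈ Ioc 0 j, (slack s x i : ℚ) / width s i < ∑ i ∈ Ioc 0 j, 1 := by
    refine sum_lt_sum_of_nonempty ⟨1, by simp [hj1]⟩ fun i hi => ?_
    obtain ⟨hi0, hij⟩ := mem_Ioc.mp hi
    rw [div_lt_one (by exact_mod_cast width_pos hs (hij.trans hj))]
    exact_mod_cast hg i hi0 (hij.trans hj)
  rw [← h, sum_const, Nat.card_Ioc, nsmul_one, Nat.sub_zero,
    div_lt_iff₀ (by exact_mod_cast sExt_pos hs hj)] at hlt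
  exact_mod_cast hlt

end Bounds

/-- The coordinates of `λ` as the sequence `(λ₀, λ₁, …)`: `λ i` is `λ_{i+1}`, and `λ₀ = 0`
(as is `λ_j` for `j > n`). -/
def coord : (Fin n → ℤ) →+ (ℕ → ℤ) where
  toFun lam j := if h : 1 ≤ j ∧ j ≤ n then lam ⟨j - 1, by omega⟩ else 0
  map_zero' := by funext j; simp
  map_add' a b := by funext j; simp only [Pi.add_apply]; split_ifs <;> simp

@[simp] lemma coord_apply_zero (lam : Fin n → ℤ) : coord lam 0 = 0 := by simp [coord]

lemma coord_succ (lam : Fin n → ℤ) (i : Fin n) : coord lam (i + 1) = lam i := by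
  simp [coord, i.isLt]

def ofSeq (n : ℕ) (x : ℕ → ℤ) : Fin n → ℤ := fun i => x (i + 1)

lemma coord_ofSeq {x : ℕ → ℤ} (hx : x 0 = 0) {j : ℕ} (hj : j ≤ n) : coord (ofSeq n x) j = x j := by
  rcases Nat.eq_zero_or_pos j with rfl | hj0
  · simp [hx]
  · obtain ⟨i, rfl⟩ : ∃ i, j = i + 1 := ⟨j - 1, by omega⟩
    exact coord_succ (ofSeq n x) ⟨i, by omega⟩

lemma slack_coord_ofSeq (s : ℕ → ℤ) {x : ℕ → ℤ} (hx : x 0 = 0) {i : ℕ} (hi : i ≤ n) :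
    slack s (coord (ofSeq n x)) i = slack s x i := by
  rw [slack_apply, slack_apply, coord_ofSeq hx hi, coord_ofSeq hx (by omega)]

lemma slack_coord_succ (s : ℕ → ℤ) (lam : Fin n → ℤ) (i : Fin n) :
    slack s (coord lam) (i + 1) = sExt s i * lam i - sExt s (i + 1) * coord lam i := by
  rw [slack_apply, coord_succ, Nat.add_sub_cancel]

lemma mem_lhPartitions_iff (hs : ∀ i, 1 ≤ i → i ≤ n → 0 < s i) (lam : Fin n → ℤ) :
    lam ∈ lhPartitions n s ↔ ∀ j, 1 ≤ j → j ≤ n → 0 ≤ slack s (coord lam) j := by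
  have hpos : ∀ i : Fin n, (0 : ℝ) < s (i + 1) := fun i => by exact_mod_cast hs _ (by omega) i.isLt
  have hfirst : ∀ i : Fin n, (i : ℕ) = 0 →
      ((0 : ℝ) ≤ lam i / s 1 ↔ 0 ≤ slack s (coord lam) (i + 1)) := fun i hi => by
    have h1 := hpos i
    rw [hi, zero_add] at h1
    rw [le_div_iff₀ h1, zero_mul, slack_coord_succ, hi]
    simp
  have hchain : ∀ i j : Fin n, (j : ℕ) = i + 1 → ((lam i : ℝ) / s (i + 1) ≤ lam j / s (j + 1) ↔
      0 ≤ slack s (coord lam) (j + 1)) := fun i j hij => by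
    rw [div_le_div_iff₀ (hpos i) (hpos j), slack_coord_succ, hij, coord_succ,
      sExt_of_ne_zero s (by omega), sExt_of_ne_zero s (by omega), sub_nonneg, mul_comm (s _),
      mul_comm (s _)]
    norm_cast
  constructor
  · rintro ⟨h0, h1⟩ j hj1 hjn
    obtain ⟨i, rfl⟩ : ∃ i : Fin n, j = i + 1 := ⟨⟨j - 1, by omega⟩, by simp; omega⟩
    rcases Nat.eq_zero_or_pos (i : ℕ) with hi | hi
    · exact (hfirst i hi).mp (h0 i hi)
    · exact (hchain ⟨i - 1, by omega⟩ i (by simp; omega)).mp (h1 _ _ (by simp; omega))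
  · intro h
    refine ⟨fun i hi => (hfirst i hi).mpr (h _ (by omega) i.isLt),
      fun i j hij => (hchain i j hij).mpr (h _ (by omega) j.isLt)⟩

def box (n : ℕ) (s : ℕ → ℤ) (m : ℤ) : Finset (Fin n → ℤ) :=
  Fintype.piFinset fun i => Icc 0 (sExt s (i + 1) * m)

/-- The lattice points `λ` with `λₙ = m`, `g_i(λ) ≥ ε` for all `i`, and `g_i(λ) < e_i + ε` for
`i > j`, where `e_i = width s i`. For `j = n` this is the cone (`ε = 0`) or its interior
(`ε = 1`) at height `m`; for `j = 0` it is the corresponding fundamental parallelepiped. -/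
def slice (n : ℕ) (s : ℕ → ℤ) (ε j : ℕ) (m : ℤ) : Finset (Fin n → ℤ) :=
  (box n s m).filter fun lam => (∀ i, 1 ≤ i → i ≤ n → ε ≤ slack s (coord lam) i) ∧
    (∀ i, j < i → i ≤ n → slack s (coord lam) i < width s i + ε) ∧ coord lam n = m

lemma mem_slice (hs : ∀ i, 1 ≤ i → i ≤ n → 0 < s i) {ε j : ℕ} {m : ℤ} {lam : Fin n → ℤ} :
    lam ∈ slice n s ε j m ↔ (∀ i, 1 ≤ i → i ≤ n → ε ≤ slack s (coord lam) i) ∧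
      (∀ i, j < i → i ≤ n → slack s (coord lam) i < width s i + ε) ∧ coord lam n = m := by
  simp only [slice, mem_filter]
  refine and_iff_right_of_imp fun h => ?_
  have hg₀ : ∀ i, 1 ≤ i → i ≤ n → 0 ≤ slack s (coord lam) i :=
    fun i h₁ h₂ => (Nat.cast_nonneg ε).trans (h.1 i h₁ h₂)
  refine Fintype.mem_piFinset.mpr fun i => mem_Icc.mpr ?_
  rw [← coord_succ lam i, ← h.2.2]
  exact ⟨nonneg_of_slack_nonneg hs (coord_apply_zero lam) hg₀ i.isLt,
    le_sExt_mul_of_slack_nonneg hs (coord_apply_zero lam) hg₀ i.isLt⟩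

lemma slice_eq_empty_of_neg (hs : ∀ i, 1 ≤ i → i ≤ n → 0 < s i) {ε j : ℕ} {m : ℤ}
    (hm : m < 0) : slice n s ε j m = ∅ := by
  refine eq_empty_of_forall_notMem fun lam hlam => ?_
  obtain ⟨hg, -, hlam⟩ := (mem_slice hs).mp hlam
  have := nonneg_of_slack_nonneg hs (coord_apply_zero lam)
    (fun i h₁ h₂ => (Nat.cast_nonneg ε).trans (hg i h₁ h₂)) le_rfl
  omega

lemma slice_zero_zero_eq_empty (hn : 1 ≤ n) (hs : ∀ i, 1 ≤ i → i ≤ n → 0 < s i) {m : ℤ}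
    (hm : n * s n ≤ m) : slice n s 0 0 m = ∅ := by
  refine eq_empty_of_forall_notMem fun lam hlam => ?_
  obtain ⟨-, hup, hlam⟩ := (mem_slice hs).mp hlam
  have := lt_mul_of_slack_lt_width hs (coord_apply_zero lam)
    (fun i _ h₂ => by simpa using hup i (by omega) h₂) hn le_rfl
  rw [sExt_of_ne_zero s (by omega)] at this
  omega

lemma slice_zero_zero_zero (hs : ∀ i, 1 ≤ i → i ≤ n → 0 < s i) : slice n s 0 0 0 = {0} := by
  ext lam
  rw [mem_slice hs, mem_singleton]
  constructor
  · rintro ⟨hg, -, hlam⟩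
    have hg₀ : ∀ i, 1 ≤ i → i ≤ n → 0 ≤ slack s (coord lam) i := by simpa using hg
    funext i
    have h₁ := nonneg_of_slack_nonneg hs (coord_apply_zero lam) hg₀ i.isLt
    have h₂ := le_sExt_mul_of_slack_nonneg hs (coord_apply_zero lam) hg₀ i.isLt
    rw [hlam, mul_zero, coord_succ] at h₂
    rw [coord_succ] at h₁
    exact le_antisymm h₂ h₁
  · rintro rfl
    refine ⟨fun i _ _ => by simp, fun i _ hin => by simpa using width_pos hs hin, by simp⟩

def ray (n : ℕ) (s : ℕ → ℤ) (j : ℕ) : Fin n → ℤ := ofSeq n fun t => if j ≤ t then sExt s t else 0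

lemma slack_ray {j : ℕ} (hj : 1 ≤ j) {i : ℕ} (hi : 1 ≤ i) (hin : i ≤ n) :
    slack s (coord (ray n s j)) i = if i = j then width s i else 0 := by
  rw [ray, slack_coord_ofSeq s (by simp; omega) hin, slack_apply, width]
  by_cases hij : j ≤ i - 1
  · simp [hij, show j ≤ i by omega, show i ≠ j by omega]; ring
  · by_cases hji : j ≤ i
    · obtain rfl : i = j := by omega
      simp [hij]
    · simp [hij, hji, show i ≠ j by omega]

lemma coord_ray_last {j : ℕ} (hj : 1 ≤ j) (hjn : j ≤ n) : coord (ray n s j) n = s n := by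
  rw [ray, coord_ofSeq (by simp; omega) le_rfl, if_pos hjn, sExt_of_ne_zero s (by omega)]

lemma slack_add_zsmul_ray {j : ℕ} (hj : 1 ≤ j) (lam : Fin n → ℤ) (k : ℤ) {i : ℕ} (hi : 1 ≤ i)
    (hin : i ≤ n) : slack s (coord (lam + k • ray n s j)) i =
      slack s (coord lam) i + if i = j then k * width s i else 0 := by
  simp only [map_add, map_zsmul, Pi.add_apply, Pi.smul_apply, slack_ray hj hi hin, smul_eq_mul,
    mul_ite, mul_zero]

lemma coord_add_zsmul_ray_last {j : ℕ} (hj : 1 ≤ j) (hjn : j ≤ n) (lam : Fin n → ℤ) (k : ℤ) :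
    coord (lam + k • ray n s j) n = coord lam n + k * s n := by
  rw [map_add, map_zsmul, Pi.add_apply, Pi.smul_apply, coord_ray_last hj hjn, smul_eq_mul]

lemma filter_slice_lt_width (hs : ∀ i, 1 ≤ i → i ≤ n → 0 < s i) (ε : ℕ) {j : ℕ} (hj : 1 ≤ j)
    (hjn : j ≤ n) (m : ℤ) :
    (slice n s ε j m).filter (fun lam => slack s (coord lam) j < width s j + ε) =
      slice n s ε (j - 1) m := by
  ext lam
  simp only [mem_filter, mem_slice hs]
  constructor
  · rintro ⟨⟨hg, hup, hm⟩, hj'⟩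
    refine ⟨hg, fun i hi hin => ?_, hm⟩
    rcases eq_or_lt_of_le (show j ≤ i by omega) with rfl | hji
    exacts [hj', hup i hji hin]
  · rintro ⟨hg, hup, hm⟩
    exact ⟨⟨hg, fun i hi hin => hup i (by omega) hin, hm⟩, hup j (by omega) hjn⟩

/-- The bijection removes one copy of `v⁽ʲ⁾`. -/
lemma card_filter_slice_not_lt_width (hs : ∀ i, 1 ≤ i → i ≤ n → 0 < s i) (ε : ℕ) {j : ℕ}
    (hj : 1 ≤ j) (hjn : j ≤ n) (m : ℤ) :
    #((slice n s ε j m).filter fun lam => ¬ slack s (coord lam) j < width s j + ε) =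
      #(slice n s ε j (m - s n)) := by
  refine card_nbij' (· + (-1 : ℤ) • ray n s j) (· + (1 : ℤ) • ray n s j) (fun lam hlam => ?_)
    (fun lam hlam => ?_) (fun lam _ => by simp) (fun lam _ => by simp)
  · simp only [mem_coe, mem_filter, mem_slice hs, not_lt] at hlam
    obtain ⟨⟨hg, hup, hm⟩, hj'⟩ := hlam
    rw [mem_coe, mem_slice hs, coord_add_zsmul_ray_last hj hjn, hm]
    refine ⟨fun i hi hin => ?_, fun i hi hin => ?_, by ring⟩ <;>
      rw [slack_add_zsmul_ray hj lam _ (by omega) hin]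
    · split_ifs with hij
      · subst hij; linarith
      · simpa using hg i hi hin
    · simpa [show i ≠ j by omega] using hup i hi hin
  · rw [mem_coe, mem_slice hs] at hlam
    obtain ⟨hg, hup, hm⟩ := hlam
    simp only [mem_coe, mem_filter, mem_slice hs, not_lt, coord_add_zsmul_ray_last hj hjn, hm]
    refine ⟨⟨fun i hi hin => ?_, fun i hi hin => ?_, by ring⟩, ?_⟩
    · rw [slack_add_zsmul_ray hj lam _ hi hin]
      have := width_pos hs hin
      split_ifs <;> linarith [hg i hi hin]
    · rw [slack_add_zsmul_ray hj lam _ (by omega) hin, if_neg (by omega), add_zero]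
      exact hup i hi hin
    · rw [slack_add_zsmul_ray hj lam _ hj hjn, if_pos rfl]
      linarith [hg j hj hjn]

lemma card_slice_rec (hs : ∀ i, 1 ≤ i → i ≤ n → 0 < s i) (ε : ℕ) {j : ℕ} (hj : 1 ≤ j)
    (hjn : j ≤ n) (m : ℤ) :
    #(slice n s ε j m) = #(slice n s ε (j - 1) m) + #(slice n s ε j (m - s n)) := by
  rw [← filter_slice_lt_width hs ε hj hjn, ← card_filter_slice_not_lt_width hs ε hj hjn,
    card_filter_add_card_filter_not]

section Series

open PowerSeries

def sliceSeries (n : ℕ) (s : ℕ → ℤ) (ε j : ℕ) : PowerSeries ℚ :=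
  mk fun m => (#(slice n s ε j m) : ℚ)

lemma sliceSeries_mul_one_sub (hs : ∀ i, 1 ≤ i → i ≤ n → 0 < s i) (ε : ℕ) {j : ℕ} (hj : 1 ≤ j)
    (hjn : j ≤ n) : sliceSeries n s ε j * (1 - X ^ (s n).toNat) = sliceSeries n s ε (j - 1) := by
  have hd : ((s n).toNat : ℤ) = s n := Int.toNat_of_nonneg (hs n (hj.trans hjn) le_rfl).le
  ext m
  simp only [sliceSeries, mul_sub, mul_one, map_sub, coeff_mul_X_pow', coeff_mk,
    card_slice_rec hs ε hj hjn m, Nat.cast_add]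
  split_ifs with hm
  · rw [Nat.cast_sub hm, hd]; ring
  · rw [slice_eq_empty_of_neg hs (show (m : ℤ) - s n < 0 by omega)]; simp

lemma sliceSeries_mul_pow (hs : ∀ i, 1 ≤ i → i ≤ n → 0 < s i) (ε : ℕ) {j : ℕ} (hjn : j ≤ n) :
    sliceSeries n s ε j * (1 - X ^ (s n).toNat) ^ j = sliceSeries n s ε 0 := by
  induction j with
  | zero => simp
  | succ j ih =>
    rw [pow_succ, ← mul_assoc, mul_right_comm, sliceSeries_mul_one_sub hs ε (by omega) hjn,
      Nat.add_sub_cancel, ih (by omega)]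

lemma sliceSeries_eq_X_pow_mul_iff (hs : ∀ i, 1 ≤ i → i ≤ n → 0 < s i) (ε ε' j k : ℕ) :
    sliceSeries n s ε j = X ^ k * sliceSeries n s ε' j ↔
      ∀ m : ℤ, #(slice n s ε j m) = #(slice n s ε' j (m - k)) := by
  simp only [PowerSeries.ext_iff, sliceSeries, coeff_X_pow_mul', coeff_mk]
  constructor
  · intro h m
    rcases lt_or_ge m 0 with hm | hm
    · rw [slice_eq_empty_of_neg hs hm, slice_eq_empty_of_neg hs (by omega)]
    · lift m to ℕ using hm
      have := h m
      split_ifs at this with hkm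
      · rw [Nat.cast_sub hkm] at this; exact_mod_cast this
      · rw [slice_eq_empty_of_neg hs (by omega : (m : ℤ) - k < 0)]
        exact_mod_cast this
  · intro h m
    rw [h]
    split_ifs with hkm
    · rw [Nat.cast_sub hkm]
    · rw [slice_eq_empty_of_neg hs (show (m : ℤ) - k < 0 by omega)]; rfl

lemma ehrhartSeries_eq (hn : 1 ≤ n) (hs : ∀ i, 1 ≤ i → i ≤ n → 0 < s i) :
    ehrhartSeries n s = sliceSeries n s 0 n * PowerSeries.mk 1 := by
  ext t
  rw [coeff_mul, Finset.Nat.sum_antidiagonal_eq_sum_range_succ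
    (fun i j => coeff i (sliceSeries n s 0 n) * coeff j (PowerSeries.mk 1))]
  simp only [ehrhartSeries, sliceSeries, coeff_mk, Pi.one_apply, mul_one]
  have hlast (lam : Fin n → ℤ) : lam ⟨n - 1, by omega⟩ = coord lam n := by
    simpa [Nat.sub_add_cancel hn] using (coord_succ lam ⟨n - 1, by omega⟩).symm
  have hset : {lam : Fin n → ℤ | lam ∈ lhPartitions n s ∧
      ∀ h : 0 < n, lam ⟨n - 1, Nat.sub_lt h Nat.one_pos⟩ ≤ (t : ℤ)} =
      ↑((range (t + 1)).biUnion fun m => slice n s 0 n m) := by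
    ext lam
    simp only [Set.mem_ofPred_eq, coe_biUnion, mem_coe, mem_range, Set.mem_iUnion, mem_slice hs,
      mem_lhPartitions_iff hs, hlast, Nat.cast_zero]
    constructor
    · rintro ⟨hg, ht⟩
      have := nonneg_of_slack_nonneg hs (coord_apply_zero lam) hg le_rfl
      exact ⟨(coord lam n).toNat, by have := ht (by omega); omega, hg, by omega, by omega⟩
    · rintro ⟨m, hm, hg, -, hlam⟩
      exact ⟨hg, fun _ => by omega⟩
  rw [hset, Set.ncard_coe_finset, card_biUnion]
  · push_cast; rfl
  · intro a _ b _ hab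
    refine disjoint_left.mpr fun lam ha hb => hab ?_
    rw [mem_slice hs] at ha hb
    exact_mod_cast ha.2.2.symm.trans hb.2.2

end Series

/-- `v⁽¹⁾ + ⋯ + v⁽ⁿ⁾`, the far vertex of the fundamental parallelepiped. -/
def raySum (n : ℕ) (s : ℕ → ℤ) : Fin n → ℤ := ofSeq n fun t => t * sExt s t

lemma slack_raySum {i : ℕ} (hi : 1 ≤ i) (hin : i ≤ n) :
    slack s (coord (raySum n s)) i = width s i := by
  rw [raySum, slack_coord_ofSeq s (by simp) hin, slack_apply, width, Nat.cast_sub hi]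
  ring

lemma coord_raySum_last : coord (raySum n s) n = n * sExt s n :=
  coord_ofSeq (by simp) le_rfl

lemma sub_mem_slice_of_mem_slice (hs : ∀ i, 1 ≤ i → i ≤ n → 0 < s i) {ε ε' : ℕ} {c : Fin n → ℤ}
    (hc : ∀ i, 1 ≤ i → i ≤ n → slack s (coord c) i + ε + ε' = 1) {m : ℤ} {lam : Fin n → ℤ}
    (hlam : lam ∈ slice n s ε 0 m) :
    raySum n s - c - lam ∈ slice n s ε' 0 (n * sExt s n - coord c n - m) := by
  obtain ⟨hg, hup, hm⟩ := (mem_slice hs).mp hlam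
  have hslack {i : ℕ} (hi : 1 ≤ i) (hin : i ≤ n) : slack s (coord (raySum n s - c - lam)) i =
      width s i - slack s (coord c) i - slack s (coord lam) i := by
    simp only [map_sub, Pi.sub_apply, slack_raySum hi hin]
  refine (mem_slice hs).mpr ⟨fun i hi hin => ?_, fun i hi hin => ?_, ?_⟩
  · rw [hslack hi hin]; linarith [hup i hi hin, hc i hi hin]
  · rw [hslack (by omega) hin]; linarith [hg i (by omega) hin, hc i (by omega) hin]
  · simp only [map_sub, Pi.sub_apply, coord_raySum_last, hm]

/-- Via the point reflection `λ ↦ v⁽¹⁾ + ⋯ + v⁽ⁿ⁾ - c - λ`. -/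
lemma card_slice_reflect (hs : ∀ i, 1 ≤ i → i ≤ n → 0 < s i) {ε ε' : ℕ} {c : Fin n → ℤ}
    (hc : ∀ i, 1 ≤ i → i ≤ n → slack s (coord c) i + ε + ε' = 1) (m : ℤ) :
    #(slice n s ε 0 m) = #(slice n s ε' 0 (n * sExt s n - coord c n - m)) := by
  have hc' : ∀ i, 1 ≤ i → i ≤ n → slack s (coord c) i + ε' + ε = 1 :=
    fun i hi hin => by rw [add_right_comm]; exact hc i hi hin
  refine card_nbij' (raySum n s - c - ·) (raySum n s - c - ·) (fun lam hlam => ?_)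
    (fun lam hlam => ?_) (fun lam _ => sub_sub_cancel _ _) (fun lam _ => sub_sub_cancel _ _)
  · exact sub_mem_slice_of_mem_slice hs hc hlam
  · simpa using sub_mem_slice_of_mem_slice hs hc' hlam

section Palindromic

open Polynomial

lemma reverse_eq_self_iff_exists_symm {R : Type*} [Semiring R] {P : R[X]} {a : ℤ → R}
    (ha : ∀ i : ℕ, P.coeff i = a i) (hneg : ∀ m < 0, a m = 0) (h0 : a 0 ≠ 0) :
    P.reverse = P ↔ ∃ M : ℤ, ∀ m, a m = a (M - m) := by
  have hvan : ∀ m : ℤ, P.natDegree < m → a m = 0 := fun m hm => by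
    lift m to ℕ using (by omega)
    rw [← ha, coeff_eq_zero_of_natDegree_lt (by omega)]
  constructor
  · intro h
    refine ⟨P.natDegree, fun m => ?_⟩
    rcases lt_or_ge m 0 with hm | hm
    · rw [hneg m hm, hvan _ (by omega)]
    rcases lt_or_ge (P.natDegree : ℤ) m with hm' | hm'
    · rw [hvan m hm', hneg _ (by omega)]
    lift m to ℕ using hm
    have hcoeff : P.reverse.coeff m = P.coeff m := by rw [h]
    rw [← ha, ← hcoeff, coeff_reverse, revAt_le (by omega), ha]
    push_cast [show m ≤ P.natDegree by omega]
    rfl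
  · rintro ⟨M, hM⟩
    have hM0 : 0 ≤ M := by
      by_contra! hM0
      exact h0 (by rw [hM, sub_zero, hneg M hM0])
    lift M to ℕ using hM0
    have hdeg : P.natDegree = M := by
      refine natDegree_eq_of_le_of_coeff_ne_zero
        ((natDegree_le_iff_coeff_eq_zero).mpr fun k hk => ?_)
        (by rw [ha, hM, sub_self]; exact h0)
      rw [ha, hM, hneg _ (show (M : ℤ) - k < 0 by omega)]
    ext k
    rw [coeff_reverse, hdeg]
    rcases le_or_gt k M with hk | hk
    · rw [revAt_le hk, ha, ha, hM k]
      push_cast [hk]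
      ring_nf
    · rw [revAt_eq_self_of_lt hk]

end Palindromic

section Numerator

open Polynomial

def parPoly (n : ℕ) (s : ℕ → ℤ) : ℚ[X] :=
  ∑ m ∈ range (n * (s n).toNat), C (#(slice n s 0 0 m) : ℚ) * X ^ m

lemma coeff_parPoly (hn : 1 ≤ n) (hs : ∀ i, 1 ≤ i → i ≤ n → 0 < s i) (m : ℕ) :
    (parPoly n s).coeff m = #(slice n s 0 0 m) := by
  simp only [parPoly, finsetSum_coeff, coeff_C_mul_X_pow, sum_ite_eq, mem_range]
  split_ifs with hm
  · rfl
  · have hd : ((s n).toNat : ℤ) = s n := Int.toNat_of_nonneg (hs n hn le_rfl).le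
    have hm' : (n : ℤ) * s n ≤ m := by
      rw [← hd]; exact_mod_cast Nat.le_of_not_lt hm
    rw [slice_zero_zero_eq_empty hn hs hm']
    simp

lemma coe_parPoly (hn : 1 ≤ n) (hs : ∀ i, 1 ≤ i → i ≤ n → 0 < s i) :
    (parPoly n s : PowerSeries ℚ) = sliceSeries n s 0 0 := by
  ext m
  rw [coeff_coe, coeff_parPoly hn hs, sliceSeries, PowerSeries.coeff_mk]

lemma coeff_geom_sum_X (d k : ℕ) :
    (∑ i ∈ range d, (X : ℚ[X]) ^ i).coeff k = if k < d then 1 else 0 := by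
  simp [finsetSum_coeff, coeff_X_pow]

lemma reverse_geom_sum_X {d : ℕ} (hd : d ≠ 0) :
    (∑ i ∈ range d, (X : ℚ[X]) ^ i).reverse = ∑ i ∈ range d, (X : ℚ[X]) ^ i := by
  have hdeg : (∑ i ∈ range d, (X : ℚ[X]) ^ i).natDegree = d - 1 := by
    refine natDegree_eq_of_le_of_coeff_ne_zero ((natDegree_le_iff_coeff_eq_zero).mpr fun k hk => ?_)
      (by rw [coeff_geom_sum_X, if_pos (by omega)]; exact one_ne_zero)
    rw [coeff_geom_sum_X, if_neg (by omega)]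
  ext k
  rw [coeff_reverse, hdeg, coeff_geom_sum_X, coeff_geom_sum_X]
  rcases le_or_gt k (d - 1) with hk | hk
  · rw [revAt_le hk, if_pos (by omega), if_pos (by omega)]
  · rw [revAt_eq_self_of_lt hk]

lemma ehrhartSeries_mul_eq (hn : 1 ≤ n) (hs : ∀ i, 1 ≤ i → i ≤ n → 0 < s i) :
    ehrhartSeries n s * (1 - PowerSeries.X ^ (s n).toNat) ^ (n + 1) =
      (((∑ i ∈ range (s n).toNat, X ^ i) * parPoly n s : ℚ[X]) : PowerSeries ℚ) := by
  have hgeom : (1 - PowerSeries.X) * ((∑ i ∈ range (s n).toNat, X ^ i : ℚ[X]) : PowerSeries ℚ) =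
      1 - PowerSeries.X ^ (s n).toNat := by
    rw [← coe_X, ← Polynomial.coe_one, ← Polynomial.coe_sub, ← Polynomial.coe_mul,
      ← Polynomial.coe_pow, ← Polynomial.coe_sub, mul_neg_geom_sum]
  rw [ehrhartSeries_eq hn hs, Polynomial.coe_mul, coe_parPoly hn hs,
    ← sliceSeries_mul_pow hs 0 le_rfl]
  linear_combination
    (sliceSeries n s 0 n * (1 - PowerSeries.X ^ (s n).toNat) ^ n) *
      (((∑ i ∈ range (s n).toNat, X ^ i : ℚ[X]) : PowerSeries ℚ) *
        PowerSeries.mk_one_mul_one_sub_eq_one ℚ - PowerSeries.mk 1 * hgeom)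

lemma hStarSymmetric_iff (hn : 1 ≤ n) (hs : ∀ i, 1 ≤ i → i ≤ n → 0 < s i) :
    HStarSymmetric n s ↔ (parPoly n s).reverse = parPoly n s := by
  have hd : (s n).toNat ≠ 0 := by have := hs n hn le_rfl; omega
  have hgeom : (∑ i ∈ range (s n).toNat, X ^ i : ℚ[X]) ≠ 0 := (monic_geom_sum_X hd).ne_zero
  constructor
  · rintro ⟨Q, hQ, hrev⟩
    rw [ehrhartSeries_mul_eq hn hs, Polynomial.coe_inj] at hQ
    rw [hQ, reverse_mul_of_domain, reverse_geom_sum_X hd] at hrev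
    exact mul_left_cancel₀ hgeom hrev
  · intro h
    refine ⟨_, (ehrhartSeries_mul_eq hn hs).symm, ?_⟩
    rw [reverse_mul_of_domain, reverse_geom_sum_X hd, h]

end Numerator

def IsGorenstein (n : ℕ) (s : ℕ → ℤ) : Prop :=
  ∃ c : Fin n → ℤ, ∀ i, 1 ≤ i → i ≤ n → slack s (coord c) i = 1

lemma exists_symm_of_isGorenstein (hs : ∀ i, 1 ≤ i → i ≤ n → 0 < s i) (h : IsGorenstein n s) :
    ∃ M : ℤ, ∀ m, #(slice n s 0 0 m) = #(slice n s 0 0 (M - m)) := by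
  obtain ⟨c, hc⟩ := h
  exact ⟨_, card_slice_reflect hs (ε := 0) (ε' := 0) (c := c) fun i hi hin => by simp [hc i hi hin]⟩

lemma card_slice_last_shift (hn : 1 ≤ n) (hs : ∀ i, 1 ≤ i → i ≤ n → 0 < s i) {ε ε' k : ℕ}
    (h : ∀ m, #(slice n s ε 0 m) = #(slice n s ε' 0 (m - k))) (m : ℤ) :
    #(slice n s ε n m) = #(slice n s ε' n (m - k)) := by
  rw [← sliceSeries_eq_X_pow_mul_iff hs] at h
  refine (sliceSeries_eq_X_pow_mul_iff hs ε ε' n k).mp ?_ m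
  have hd : (s n).toNat ≠ 0 := by have := hs n hn le_rfl; omega
  have hA : (1 - PowerSeries.X ^ (s n).toNat : PowerSeries ℚ) ≠ 0 := fun hA => by
    simpa [hd] using congrArg (PowerSeries.coeff 0) hA
  refine mul_right_cancel₀ (pow_ne_zero n hA) ?_
  rw [mul_assoc, sliceSeries_mul_pow hs _ le_rfl, sliceSeries_mul_pow hs _ le_rfl, h]

/-- `c + (cone at height m - cₙ)` lies in the interior at height `m` and has the same size. -/
lemma exists_eq_add_of_card_eq (hs : ∀ i, 1 ≤ i → i ≤ n → 0 < s i) {c : Fin n → ℤ}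
    (hc : ∀ i, 1 ≤ i → i ≤ n → 1 ≤ slack s (coord c) i)
    (hcard : ∀ m, #(slice n s 1 n m) = #(slice n s 0 n (m - coord c n))) {x : Fin n → ℤ}
    (hx : ∀ i, 1 ≤ i → i ≤ n → 1 ≤ slack s (coord x) i) :
    ∃ z : Fin n → ℤ, (∀ i, 1 ≤ i → i ≤ n → 0 ≤ slack s (coord z) i) ∧ x = c + z := by
  set m := coord x n
  have hsub : (slice n s 0 n (m - coord c n)).image (c + ·) ⊆ slice n s 1 n m := by
    intro y hy
    obtain ⟨z, hz, rfl⟩ := mem_image.mp hy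
    obtain ⟨hg, -, hzn⟩ := (mem_slice hs).mp hz
    refine (mem_slice hs).mpr ⟨fun i hi hin => ?_, fun i hi hin => by omega, ?_⟩
    · simp only [map_add, Pi.add_apply, Nat.cast_one]
      linarith [hc i hi hin, hg i hi hin, show ((0 : ℕ) : ℤ) = 0 from rfl]
    · simp only [map_add, Pi.add_apply, hzn]; ring
  have heq := eq_of_subset_of_card_le hsub (by
    rw [card_image_of_injective _ (add_right_injective c), hcard])
  have hxm : x ∈ slice n s 1 n m :=
    (mem_slice hs).mpr ⟨by exact_mod_cast hx, fun i hi hin => by omega, rfl⟩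
  rw [← heq] at hxm
  obtain ⟨z, hz, rfl⟩ := mem_image.mp hxm
  exact ⟨z, by simpa using ((mem_slice hs).mp hz).1, rfl⟩

lemma exists_slack_eq_one (hgcd : ∀ i, 1 ≤ i → i < n → Int.gcd (s i) (s (i + 1)) = 1) {j : ℕ}
    (hj : 1 ≤ j) (hjn : j ≤ n) : ∃ y : Fin n → ℤ, slack s (coord y) j = 1 := by
  rcases eq_or_lt_of_le hj with rfl | hj
  · refine ⟨ofSeq n fun t => if t = 1 then 1 else 0, ?_⟩
    rw [slack_coord_ofSeq s (by simp) hjn, slack_apply]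
    simp
  · have hcop : IsCoprime (s (j - 1)) (s j) := by
      rw [Int.isCoprime_iff_gcd_eq_one]
      simpa [Nat.sub_add_cancel hj.le] using hgcd (j - 1) (by omega) (by omega)
    obtain ⟨a, b, hab⟩ := hcop
    refine ⟨ofSeq n fun t => if t = j then a else if t = j - 1 then -b else 0, ?_⟩
    rw [slack_coord_ofSeq s (by split_ifs <;> omega) hjn, slack_apply,
      sExt_of_ne_zero s (by omega), sExt_of_ne_zero s (by omega)]
    simp only [if_true, show j - 1 ≠ j by omega, if_false]
    linear_combination hab

/-- Adding a large multiple of `v⁽¹⁾ + ⋯ + v⁽ⁿ⁾ - v⁽ʲ⁾` raises every `g_i` except `g_j`. -/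
lemma exists_interior_slack_eq_one (hs : ∀ i, 1 ≤ i → i ≤ n → 0 < s i)
    (hgcd : ∀ i, 1 ≤ i → i < n → Int.gcd (s i) (s (i + 1)) = 1) {j : ℕ} (hj : 1 ≤ j)
    (hjn : j ≤ n) : ∃ x : Fin n → ℤ,
      (∀ i, 1 ≤ i → i ≤ n → 1 ≤ slack s (coord x) i) ∧ slack s (coord x) j = 1 := by
  obtain ⟨y, hy⟩ := exists_slack_eq_one hgcd hj hjn
  set K := ∑ i ∈ range (n + 1), |slack s (coord y) i| + 1
  have hK : ∀ i ≤ n, |slack s (coord y) i| + 1 ≤ K := fun i hi =>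
    add_le_add_left (single_le_sum (f := fun i => |slack s (coord y) i|)
      (fun i _ => abs_nonneg _) (mem_range.mpr (show i < n + 1 by omega))) 1
  have hslack {i : ℕ} (hi : 1 ≤ i) (hin : i ≤ n) :
      slack s (coord (y + K • (raySum n s - ray n s j))) i =
        slack s (coord y) i + if i = j then 0 else K * width s i := by
    simp only [map_add, map_zsmul, map_sub, Pi.add_apply, Pi.smul_apply, Pi.sub_apply,
      slack_raySum hi hin, slack_ray hj hi hin, smul_eq_mul]
    split_ifs <;> ring
  refine ⟨y + K • (raySum n s - ray n s j), fun i hi hin => ?_,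
    by rw [hslack hj hjn, if_pos rfl, hy, add_zero]⟩
  rw [hslack hi hin]
  split_ifs with hij
  · subst hij; simp [hy]
  · have hKi := hK i hin
    have hKw : K * 1 ≤ K * width s i :=
      mul_le_mul_of_nonneg_left (width_pos hs hin) (by linarith [abs_nonneg (slack s (coord y) i)])
    linarith [neg_abs_le (slack s (coord y) i)]

lemma isGorenstein_of_symm (hn : 1 ≤ n) (hs : ∀ i, 1 ≤ i → i ≤ n → 0 < s i)
    (hgcd : ∀ i, 1 ≤ i → i < n → Int.gcd (s i) (s (i + 1)) = 1) {M : ℤ}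
    (hM : ∀ m, #(slice n s 0 0 m) = #(slice n s 0 0 (M - m))) : IsGorenstein n s := by
  have hd : sExt s n = s n := sExt_of_ne_zero s (by omega)
  have h0 : #(slice n s 0 0 0) = 1 := by rw [slice_zero_zero_zero hs, card_singleton]
  have hMN : M < n * s n := by
    by_contra! h
    have := hM M
    rw [sub_self, h0, slice_zero_zero_eq_empty hn hs h, card_empty] at this
    exact zero_ne_one this
  obtain ⟨k, hk⟩ : ∃ k : ℕ, (k : ℤ) = n * s n - M := ⟨_, Int.toNat_of_nonneg (by omega)⟩
  have hint (m : ℤ) : #(slice n s 1 0 m) = #(slice n s 0 0 (m - k)) := by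
    have := card_slice_reflect hs (ε := 0) (ε' := 1) (c := 0) (fun i _ _ => by simp) (n * s n - m)
    rw [hM, map_zero, Pi.zero_apply, hd, sub_zero, sub_sub_cancel] at this
    rw [← this, hk]
    ring_nf
  obtain ⟨c, hc⟩ := card_eq_one.mp ((hint k).trans (by rw [sub_self, h0]))
  obtain ⟨hc₁, -, hck⟩ := (mem_slice hs).mp (hc ▸ mem_singleton_self c)
  have hcard (m : ℤ) : #(slice n s 1 n m) = #(slice n s 0 n (m - coord c n)) := by
    rw [hck]; exact card_slice_last_shift hn hs hint m
  refine ⟨c, fun j hj hjn => le_antisymm ?_ (by exact_mod_cast hc₁ j hj hjn)⟩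
  obtain ⟨x, hx, hxj⟩ := exists_interior_slack_eq_one hs hgcd hj hjn
  obtain ⟨z, hz, rfl⟩ := exists_eq_add_of_card_eq hs (by exact_mod_cast hc₁) hcard hx
  rw [map_add, map_add, Pi.add_apply] at hxj
  linarith [hz j hj hjn]

lemma parPoly_reverse_eq_self_iff (hn : 1 ≤ n) (hs : ∀ i, 1 ≤ i → i ≤ n → 0 < s i)
    (hgcd : ∀ i, 1 ≤ i → i < n → Int.gcd (s i) (s (i + 1)) = 1) :
    (parPoly n s).reverse = parPoly n s ↔ IsGorenstein n s := by
  rw [reverse_eq_self_iff_exists_symm (a := fun m => (#(slice n s 0 0 m) : ℚ))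
    (coeff_parPoly hn hs) (fun m hm => by simp [slice_eq_empty_of_neg hs hm])
    (by simp [slice_zero_zero_zero hs])]
  simp only [Nat.cast_inj]
  exact ⟨fun ⟨_, hM⟩ => isGorenstein_of_symm hn hs hgcd hM, exists_symm_of_isGorenstein hs⟩

lemma uGenerated_iff (u : ℕ → ℤ) :
    UGenerated n s u ↔ ∀ i, 1 ≤ i → i < n → sExt s (i + 1) = u i * sExt s i - sExt s (i - 1) := by
  have hsExt {i : ℕ} (hi : 1 < i) : sExt s (i + 1) = u i * sExt s i - sExt s (i - 1) ↔
      s (i + 1) = u i * s i - s (i - 1) := by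
    rw [sExt_of_ne_zero s (by omega), sExt_of_ne_zero s (by omega), sExt_of_ne_zero s (by omega)]
  constructor
  · rintro ⟨h₁, h⟩ i hi hin
    rcases eq_or_lt_of_le hi with rfl | hi
    · simp [sExt, h₁ (by omega)]
    · exact (hsExt hi).mpr (h i hi hin)
  · intro h
    refine ⟨fun hn => by simpa [sExt] using h 1 le_rfl hn, fun i hi hin => ?_⟩
    exact (hsExt hi).mp (h i hi.le hin)

lemma isGorenstein_iff :
    IsGorenstein n s ↔ ∃ x : ℕ → ℤ, x 0 = 0 ∧ ∀ j, 1 ≤ j → j ≤ n → slack s x j = 1 := by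
  constructor
  · rintro ⟨c, hc⟩
    exact ⟨coord c, coord_apply_zero c, hc⟩
  · rintro ⟨x, hx, h⟩
    exact ⟨ofSeq n x, fun j hj hjn => by rw [slack_coord_ofSeq s hx hjn, h j hj hjn]⟩

/-- The coordinates of the Gorenstein point of a `u`-generated cone. -/
def uSeq (u : ℕ → ℤ) : ℕ → ℤ
  | 0 => 0
  | 1 => 1
  | j + 2 => u (j + 1) * uSeq u (j + 1) - uSeq u j

lemma slack_uSeq {u : ℕ → ℤ}
    (hu : ∀ i, 1 ≤ i → i < n → sExt s (i + 1) = u i * sExt s i - sExt s (i - 1)) {j : ℕ}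
    (hj : 1 ≤ j) (hjn : j ≤ n) : slack s (uSeq u) j = 1 := by
  induction j, hj using Nat.le_induction with
  | base => simp [slack_apply, uSeq]
  | succ j hj ih =>
    obtain ⟨i, rfl⟩ : ∃ i, j = i + 1 := ⟨j - 1, by omega⟩
    rw [← ih (by omega)]
    simp only [slack_apply, uSeq, Nat.add_sub_cancel, hu (i + 1) hj hjn]
    ring

lemma isGorenstein_iff_uGenerated (hs : ∀ i, 1 ≤ i → i ≤ n → 0 < s i) :
    IsGorenstein n s ↔ ∃ u : ℕ → ℤ, (∀ i, 1 ≤ i → i < n → 0 < u i) ∧ UGenerated n s u := by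
  simp only [isGorenstein_iff, uGenerated_iff]
  constructor
  · rintro ⟨x, hx, h⟩
    have hdvd {i : ℕ} (hi : 1 ≤ i) (hin : i < n) :
        sExt s i ∣ sExt s (i + 1) + sExt s (i - 1) := by
      have e₁ := h i hi hin.le
      have e₂ := h (i + 1) (by omega) hin
      rw [slack_apply] at e₁ e₂
      rw [Nat.add_sub_cancel] at e₂
      refine IsCoprime.dvd_of_dvd_mul_left (y := x i) ⟨x (i + 1), -sExt s (i + 1), by linarith⟩
        ⟨x (i + 1) + x (i - 1), by linear_combination e₁ - e₂⟩
    refine ⟨fun i => (sExt s (i + 1) + sExt s (i - 1)) / sExt s i, fun i hi hin => ?_,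
      fun i hi hin => ?_⟩
    · have hq := Int.ediv_mul_cancel (hdvd hi hin)
      have := sExt_pos hs (show i + 1 ≤ n by omega)
      have := sExt_pos hs (show i - 1 ≤ n by omega)
      have := sExt_pos hs hin.le
      by_contra! hneg
      nlinarith
    · linarith [Int.ediv_mul_cancel (hdvd hi hin)]
  · rintro ⟨u, -, hu⟩
    exact ⟨uSeq u, rfl, fun j hj hjn => slack_uSeq hu hj hjn⟩

end LectureHall

/-- Let `s = (s₁,…,sₙ)` be positive integers with
`gcd(sᵢ, s_{i+1}) = 1` for `1 ≤ i < n`. Then the `h^*`-vector of `R_n^{(s)}` is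
symmetric iff `s` is `u`-generated by some sequence of positive integers. -/
theorem stmt18 (n : ℕ) (hn : 1 ≤ n) (s : ℕ → ℤ) (hs : ∀ i, 1 ≤ i → i ≤ n → 0 < s i)
    (hgcd : ∀ i, 1 ≤ i → i < n → Int.gcd (s i) (s (i + 1)) = 1) :
    HStarSymmetric n s ↔
      ∃ u : ℕ → ℤ, (∀ i, 1 ≤ i → i < n → 0 < u i) ∧ UGenerated n s u := by
  rw [LectureHall.hStarSymmetric_iff hn hs, LectureHall.parPoly_reverse_eq_self_iff hn hs hgcd,
    LectureHall.isGorenstein_iff_uGenerated hs]
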